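/- Consider the operator T : (S → ℝ) → (S → ℝ) defined by (T U) s = (if s = g then 0 else −1) + γ · max_{a ∈ A} U (step s a). Then T has a unique fixed point V, and V s = −(1 − γ^{n s})/(1 − γ) for every s ∈ S; in particular V g = 0. -/

import Mathlib

open Finset Function

/-!
Let `n s` be the length of a shortest action sequence from `s` to the goal. Then `n g = 0` and,
for `s ≠ g`, `n s = 1 + min_a n (step s a)`. Since `v k := -(1 - γ^k)/(1 - γ) = -(1 + γ + ⋯ + γ^(k-1))`
is antitone and satisfies `v (k + 1) = -1 + γ v k`, the function `s ↦ v (n s)` solves the Bellman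
equation. The Bellman operator is a `γ`-contraction for the sup norm, so this solution is the only
fixed point.
-/

section GoalDistance

variable {S A : Type*} (step : S → A → S) (g : S)

noncomputable def goalDist (s : S) : ℕ :=
  sInf {k : ℕ | ∃ l : List A, l.length = k ∧ l.foldl step s = g}

variable {step g}

lemma goalDist_le_length {s : S} {l : List A} (hl : l.foldl step s = g) :
    goalDist step g s ≤ l.length :=
  Nat.sInf_le ⟨l, rfl, hl⟩

lemma exists_length_eq_goalDist {s : S} (h : ∃ l : List A, l.foldl step s = g) :
    ∃ l : List A, l.length = goalDist step g s ∧ l.foldl step s = g := by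
  obtain ⟨l, hl⟩ := h
  exact Nat.sInf_mem (s := {k : ℕ | ∃ l : List A, l.length = k ∧ l.foldl step s = g})
    ⟨l.length, l, rfl, hl⟩

@[simp]
lemma goalDist_self : goalDist step g g = 0 :=
  Nat.le_zero.mp (goalDist_le_length (l := []) rfl)

lemma goalDist_le_goalDist_step_add_one (s : S) (a : A)
    (h : ∃ l : List A, l.foldl step (step s a) = g) :
    goalDist step g s ≤ goalDist step g (step s a) + 1 := by
  obtain ⟨l, hlen, hl⟩ := exists_length_eq_goalDist h
  simpa [hlen] using goalDist_le_length (l := a :: l) hl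

lemma exists_goalDist_step_add_one_eq {s : S} (hs : s ≠ g)
    (h : ∃ l : List A, l.foldl step s = g) :
    ∃ a, goalDist step g (step s a) + 1 = goalDist step g s := by
  obtain ⟨l, hlen, hl⟩ := exists_length_eq_goalDist h
  cases l with
  | nil => exact absurd hl hs
  | cons a l =>
    refine ⟨a, le_antisymm ?_ (goalDist_le_goalDist_step_add_one s a ⟨l, hl⟩)⟩
    have := goalDist_le_length (s := step s a) hl
    simp only [List.length_cons] at hlen
    omega

end GoalDistance

section GeometricCost

variable {γ : ℝ}

lemma neg_one_sub_pow_succ_div (hγ : γ ≠ 1) (k : ℕ) :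
    -(1 - γ ^ (k + 1)) / (1 - γ) = -1 + γ * (-(1 - γ ^ k) / (1 - γ)) := by
  have : 1 - γ ≠ 0 := sub_ne_zero.mpr hγ.symm
  field_simp
  ring

lemma antitone_neg_one_sub_pow_div (h0 : 0 ≤ γ) (h1 : γ ≤ 1) :
    Antitone fun k : ℕ => -(1 - γ ^ k) / (1 - γ) := fun j k hjk => by
  have : 0 ≤ 1 - γ := sub_nonneg.mpr h1
  have := pow_le_pow_of_le_one h0 h1 hjk
  dsimp only
  gcongr

end GeometricCost

lemma Finset.sup'_le_sup'_add {ι : Type*} {s : Finset ι} (hs : s.Nonempty) {f f' : ι → ℝ}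
    {C : ℝ} (h : ∀ i ∈ s, f i ≤ f' i + C) : s.sup' hs f ≤ s.sup' hs f' + C :=
  sup'_le _ _ fun i hi => (h i hi).trans (by gcongr; exact le_sup' f' hi)

lemma Finset.dist_sup'_sup'_le {ι : Type*} {s : Finset ι} (hs : s.Nonempty) {f f' : ι → ℝ}
    {C : ℝ} (h : ∀ i ∈ s, dist (f i) (f' i) ≤ C) : dist (s.sup' hs f) (s.sup' hs f') ≤ C := by
  rw [Real.dist_eq, abs_sub_le_iff, sub_le_iff_le_add', sub_le_iff_le_add']
  constructor <;> refine sup'_le_sup'_add hs fun i hi => ?_ <;>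
    linarith [abs_sub_le_iff.1 (Real.dist_eq _ _ ▸ h i hi)]

section BellmanOperator

variable {S A : Type*} [Fintype A] [Nonempty A] (step : S → A → S) (r : S → ℝ) (γ : ℝ)

def bellmanOp (U : S → ℝ) (s : S) : ℝ :=
  r s + γ * univ.sup' univ_nonempty fun a => U (step s a)

lemma dist_bellmanOp_le [Fintype S] (hγ : 0 ≤ γ) (U W : S → ℝ) :
    dist (bellmanOp step r γ U) (bellmanOp step r γ W) ≤ γ * dist U W := by
  refine (dist_pi_le_iff (by positivity)).2 fun s => ?_
  rw [bellmanOp, bellmanOp, dist_add_left, Real.dist_eq, ← mul_sub, abs_mul, abs_of_nonneg hγ,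
    ← Real.dist_eq]
  exact mul_le_mul_of_nonneg_left (dist_sup'_sup'_le _ fun a _ => dist_le_pi_dist U W _) hγ

lemma contractingWith_bellmanOp [Fintype S] (hγ0 : 0 ≤ γ) (hγ1 : γ < 1) :
    ContractingWith ⟨γ, hγ0⟩ (bellmanOp step r γ) :=
  ⟨hγ1, LipschitzWith.of_dist_le_mul fun U W => dist_bellmanOp_le step r γ hγ0 U W⟩

variable {step γ} {g : S}

theorem isFixedPt_bellmanOp_goalDist [DecidableEq S] (habs : ∀ a, step g a = g)
    (hγ0 : 0 ≤ γ) (hγ1 : γ < 1) (hreach : ∀ s, ∃ l : List A, l.foldl step s = g) :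
    IsFixedPt (bellmanOp step (fun s => if s = g then 0 else -1) γ)
      fun s => -(1 - γ ^ goalDist step g s) / (1 - γ) := by
  funext s
  by_cases hs : s = g
  · subst hs
    simp [bellmanOp, habs]
  obtain ⟨a₀, ha₀⟩ := exists_goalDist_step_add_one_eq hs (hreach s)
  have hv := antitone_neg_one_sub_pow_div hγ0 hγ1.le
  have hmax : (univ.sup' univ_nonempty fun a => -(1 - γ ^ goalDist step g (step s a)) / (1 - γ))
      = -(1 - γ ^ goalDist step g (step s a₀)) / (1 - γ) := by
    refine le_antisymm (sup'_le _ _ fun a _ => hv ?_)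
      (le_sup' (fun a => -(1 - γ ^ goalDist step g (step s a)) / (1 - γ)) (mem_univ a₀))
    have := goalDist_le_goalDist_step_add_one s a (hreach _)
    omega
  rw [bellmanOp, if_neg hs, hmax, ← ha₀, neg_one_sub_pow_succ_div hγ1.ne]

end BellmanOperator

theorem stmt8_general {S A : Type*} [Fintype S] [DecidableEq S]
    [Fintype A] [Nonempty A]
    (step : S → A → S) (g : S) (habs : ∀ a, step g a = g)
    (γ : ℝ) (hγ0 : 0 ≤ γ) (hγ1 : γ < 1)
    (hreach : ∀ s, ∃ k : ℕ, ∃ l : List A, l.length = k ∧ l.foldl step s = g)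
    (T : (S → ℝ) → (S → ℝ))
    (hT : ∀ U s, T U s = (if s = g then 0 else -1) +
      γ * (Finset.univ.sup' Finset.univ_nonempty fun a => U (step s a))) :
    (∃! V : S → ℝ, T V = V) ∧
    ∀ V : S → ℝ, T V = V →
      (∀ s, V s =
        -(1 - γ ^ sInf {k : ℕ | ∃ l : List A, l.length = k ∧ l.foldl step s = g})
          / (1 - γ)) ∧
      V g = 0 := by
  obtain rfl : T = bellmanOp step (fun s => if s = g then 0 else -1) γ :=
    funext fun U => funext (hT U)
  have hfix := isFixedPt_bellmanOp_goalDist habs hγ0 hγ1 fun s => by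
    obtain ⟨-, l, -, hl⟩ := hreach s
    exact ⟨l, hl⟩
  have huniq := fun V (hV : IsFixedPt _ V) =>
    (contractingWith_bellmanOp step _ γ hγ0 hγ1).fixedPoint_unique' hV hfix
  refine ⟨⟨_, hfix, huniq⟩, fun V hV => ?_⟩
  obtain rfl := huniq V hV
  exact ⟨fun s => rfl, by simp⟩

/-- Deterministic goal-reaching with reward `−1` per step before arrival: the
Bellman optimality operator has a unique fixed point `V`, and
`V s = −(1 − γ^(n s))/(1 − γ)` where `n s` is the shortest path length from `s`
to the goal; in particular `V g = 0`. -/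
theorem stmt8 {S A : Type*} [Fintype S] [Nonempty S] [DecidableEq S]
    [Fintype A] [Nonempty A]
    (step : S → A → S) (g : S) (habs : ∀ a, step g a = g)
    (γ : ℝ) (hγ0 : 0 ≤ γ) (hγ1 : γ < 1)
    (hreach : ∀ s, ∃ k : ℕ, ∃ l : List A, l.length = k ∧ l.foldl step s = g)
    (T : (S → ℝ) → (S → ℝ))
    (hT : ∀ U s, T U s = (if s = g then 0 else -1) +
      γ * (Finset.univ.sup' Finset.univ_nonempty fun a => U (step s a))) :
    (∃! V : S → ℝ, T V = V) ∧
    ∀ V : S → ℝ, T V = V →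
      (∀ s, V s =
        -(1 - γ ^ sInf {k : ℕ | ∃ l : List A, l.length = k ∧ l.foldl step s = g})
          / (1 - γ)) ∧
      V g = 0 :=
  stmt8_general step g habs γ hγ0 hγ1 hreach T hT
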